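/- Let (X,μ) be a measure space, 0<q<∞ and J ⊆ (0,∞) with m_J = inf J > 0 and M_J = sup J = ∞. Then IL_{J,q}(X,μ) = {0}, i.e. every f ∈ IL_{J,q}(X,μ) vanishes μ-almost everywhere on X. -/

import Mathlib

open MeasureTheory Set ENNReal

noncomputable section

variable {X : Type*} [MeasurableSpace X]

/-- The distribution function `d_f(α) = μ {x : |f x| > α}`. -/
def distFun (μ : Measure X) (f : X → ℝ) (α : ℝ) : ℝ≥0∞ :=
  μ {x | α < |f x|}

/-- The decreasing rearrangement `f*(t) = inf {s > 0 : d_f(s) ≤ t}`, with `inf ∅ = ∞`. -/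
def rearr (μ : Measure X) (f : X → ℝ) (t : ℝ) : ℝ≥0∞ :=
  ⨅ (s : ℝ) (_ : 0 < s ∧ distFun μ f s ≤ ENNReal.ofReal t), ENNReal.ofReal s

/-- The Lorentz quasi-norm `‖f‖_{L_{p,q}}` (for `q = ∞` the weak norm `sup_t t^{1/p} f*(t)`). -/
def lorentzNorm (μ : Measure X) (f : X → ℝ) (p q : ℝ≥0∞) : ℝ≥0∞ :=
  if q = ∞ then ⨆ t ∈ Ioi (0 : ℝ), ENNReal.ofReal t ^ (1 / p).toReal * rearr μ f t
  else (∫⁻ t in Ioi (0 : ℝ),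
      (ENNReal.ofReal t ^ (1 / p).toReal * rearr μ f t) ^ q.toReal / ENNReal.ofReal t) ^
      (1 / q.toReal)

/-- The Lorentz space `L_{p,q}(X, μ)`, as the set of measurable functions with
finite Lorentz quasi-norm. -/
def Lorentz (μ : Measure X) (p q : ℝ≥0∞) : Set (X → ℝ) :=
  {f | Measurable f ∧ lorentzNorm μ f p q < ∞}

/-- `IL_{J,q}(X,μ)`: functions in every `L_{p,q}`, `p ∈ J`, with uniformly bounded norms. -/
def ILJq (μ : Measure X) (J : Set ℝ≥0∞) (q : ℝ≥0∞) : Set (X → ℝ) :=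
  {f | (∀ p ∈ J, f ∈ Lorentz μ p q) ∧ (⨆ p ∈ J, lorentzNorm μ f p q) < ∞}

/-! If `d_f(α) > 0` for some `α > 0`, then `f* ≥ α` on some interval `(0, a]` with `a ≤ 1`, so
`‖f‖_{L_{p,q}}^q ≥ α^q ∫_0^a t^{q/p - 1} dt = α^q (p/q) a^{q/p} ≥ α^q a p / q`.
This is unbounded as `p → ∞` through `J`, contradicting the uniform bound; hence `d_f(α) = 0`
for every `α > 0`, i.e. `f = 0` a.e. -/

theorem lintegral_Ioc_rpow_sub_one {a c : ℝ} (ha : 0 ≤ a) (hc : 0 < c) :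
    ∫⁻ t in Ioc 0 a, ENNReal.ofReal (t ^ (c - 1)) = ENNReal.ofReal (a ^ c / c) := by
  have hint : IntegrableOn (fun t : ℝ => t ^ (c - 1)) (Ioc 0 a) :=
    (intervalIntegral.intervalIntegrable_rpow' (by linarith)).1
  rw [← ofReal_integral_eq_lintegral_ofReal hint, ← intervalIntegral.integral_of_le ha,
    integral_rpow (Or.inl (by linarith)), sub_add_cancel, Real.zero_rpow hc.ne', sub_zero]
  filter_upwards [ae_restrict_mem measurableSet_Ioc] with t ht
  exact Real.rpow_nonneg ht.1.le _

section Rearrangement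

variable {μ : Measure X} {f : X → ℝ}

theorem distFun_antitone : Antitone (distFun μ f) :=
  fun _ _ hαβ => measure_mono fun _ hx => hαβ.trans_lt hx

theorem rearr_antitone : Antitone (rearr μ f) :=
  fun _ _ hst => le_iInf₂ fun s hs => iInf₂_le s ⟨hs.1, hs.2.trans (ofReal_le_ofReal hst)⟩

theorem ofReal_le_rearr {α t : ℝ} (h : ENNReal.ofReal t < distFun μ f α) :
    ENNReal.ofReal α ≤ rearr μ f t :=
  le_iInf₂ fun _ hs => ofReal_le_ofReal <|
    not_lt.1 fun hsα => (hs.2.trans_lt h).not_ge (distFun_antitone hsα.le)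

theorem ae_eq_zero_of_distFun_eq_zero (h : ∀ α, 0 < α → distFun μ f α = 0) : f =ᵐ[μ] 0 := by
  have hsub : {x | f x ≠ 0} ⊆ ⋃ n : ℕ, {x | 1 / (n + 1 : ℝ) < |f x|} := fun x hx =>
    mem_iUnion.2 (exists_nat_one_div_lt (abs_pos.2 hx))
  exact ae_iff.2 (measure_mono_null hsub (measure_iUnion_null fun n => h _ (by positivity)))

theorem le_lorentzNorm_of_le_rearr {p q : ℝ≥0∞} (hp0 : p ≠ 0) (hp : p ≠ ∞) (hq0 : q ≠ 0)
    (hq : q ≠ ∞) {a : ℝ} (ha : 0 ≤ a) {A : ℝ≥0∞} (hA : ∀ t ∈ Ioc 0 a, A ≤ rearr μ f t) :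
    A * ENNReal.ofReal (a ^ (q.toReal / p.toReal) / (q.toReal / p.toReal)) ^ (1 / q.toReal)
      ≤ lorentzNorm μ f p q := by
  set Q := q.toReal
  set c := Q / p.toReal
  have hQ : 0 < Q := toReal_pos hq0 hq
  have hc : 0 < c := div_pos hQ (toReal_pos hp0 hp)
  have hexp : (1 / p).toReal * Q = c := by
    rw [one_div, toReal_inv, inv_mul_eq_div]
  have hpt : ∀ t ∈ Ioc 0 a, A ^ Q * ENNReal.ofReal (t ^ (c - 1))
      ≤ (ENNReal.ofReal t ^ (1 / p).toReal * rearr μ f t) ^ Q / ENNReal.ofReal t := by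
    intro t ht
    calc A ^ Q * ENNReal.ofReal (t ^ (c - 1))
        = (ENNReal.ofReal t ^ (1 / p).toReal * A) ^ Q / ENNReal.ofReal t := by
          rw [ENNReal.mul_rpow_of_nonneg _ _ hQ.le, ← ENNReal.rpow_mul, hexp,
            ENNReal.ofReal_rpow_of_pos ht.1, Real.rpow_sub ht.1, Real.rpow_one,
            ENNReal.ofReal_div_of_pos ht.1, div_eq_mul_inv, div_eq_mul_inv]
          ring
      _ ≤ _ := by gcongr; exact hA t ht
  have hmeas : Measurable fun t : ℝ =>
      (ENNReal.ofReal t ^ (1 / p).toReal * rearr μ f t) ^ Q / ENNReal.ofReal t :=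
    (((ENNReal.measurable_ofReal.pow_const _).mul rearr_antitone.measurable).pow_const Q).div
      ENNReal.measurable_ofReal
  have hint : A ^ Q * ENNReal.ofReal (a ^ c / c) ≤ ∫⁻ t in Ioi 0,
      (ENNReal.ofReal t ^ (1 / p).toReal * rearr μ f t) ^ Q / ENNReal.ofReal t := by
    calc A ^ Q * ENNReal.ofReal (a ^ c / c)
        = ∫⁻ t in Ioc 0 a, A ^ Q * ENNReal.ofReal (t ^ (c - 1)) := by
          rw [lintegral_const_mul _ (by fun_prop), lintegral_Ioc_rpow_sub_one ha hc]
      _ ≤ _ := setLIntegral_mono hmeas hpt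
      _ ≤ _ := lintegral_mono_set Ioc_subset_Ioi_self
  rw [lorentzNorm, if_neg hq]
  calc A * ENNReal.ofReal (a ^ c / c) ^ (1 / Q)
      = (A ^ Q * ENNReal.ofReal (a ^ c / c)) ^ (1 / Q) := by
        rw [ENNReal.mul_rpow_of_nonneg _ _ (by positivity), ← ENNReal.rpow_mul,
          mul_one_div_cancel hQ.ne', ENNReal.rpow_one]
    _ ≤ _ := by gcongr

theorem le_lorentzNorm_of_le_rearr_of_le {p q : ℝ≥0∞} (hp : p ≠ ∞) (hq0 : q ≠ 0) (hqp : q ≤ p)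
    {a : ℝ} (ha0 : 0 < a) (ha1 : a ≤ 1) {A : ℝ≥0∞} (hA : ∀ t ∈ Ioc 0 a, A ≤ rearr μ f t) :
    A * (ENNReal.ofReal a * p / q) ^ (1 / q.toReal) ≤ lorentzNorm μ f p q := by
  have hq : q ≠ ∞ := ne_top_of_le_ne_top hp hqp
  have hQ : 0 < q.toReal := toReal_pos hq0 hq
  have hP : 0 < p.toReal := hQ.trans_le (toReal_mono hp hqp)
  set c := q.toReal / p.toReal
  have hc1 : c ≤ 1 := div_le_one_of_le₀ (toReal_mono hp hqp) hP.le
  have hac : a / c ≤ a ^ c / c := by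
    gcongr
    simpa using Real.rpow_le_rpow_of_exponent_ge ha0 ha1 hc1
  have hconv : ENNReal.ofReal (a / c) = ENNReal.ofReal a * p / q := by
    rw [div_div_eq_mul_div, ENNReal.ofReal_div_of_pos hQ, ENNReal.ofReal_mul ha0.le,
      ofReal_toReal hp, ofReal_toReal hq]
  calc A * (ENNReal.ofReal a * p / q) ^ (1 / q.toReal)
      ≤ A * ENNReal.ofReal (a ^ c / c) ^ (1 / q.toReal) := by
        rw [← hconv]; gcongr
    _ ≤ lorentzNorm μ f p q :=
        le_lorentzNorm_of_le_rearr (pos_iff_ne_zero.1 (hq0.bot_lt.trans_le hqp)) hp hq0 hq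
          ha0.le hA

theorem distFun_eq_zero_of_iSup_lorentzNorm_lt_top {q : ℝ≥0∞} (hq0 : q ≠ 0) (hq : q ≠ ∞)
    {J : Set ℝ≥0∞} (hJ : J ⊆ Iio ∞) (hM : sSup J = ∞)
    (hf : ⨆ p ∈ J, lorentzNorm μ f p q < ∞) {α : ℝ} (hα : 0 < α) : distFun μ f α = 0 := by
  by_contra hd
  obtain ⟨r, -, hr0, hrd⟩ := ENNReal.lt_iff_exists_real_btwn.1 (pos_iff_ne_zero.2 hd)
  set a := min r 1
  have ha0 : 0 < a := lt_min (ofReal_pos.1 hr0) one_pos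
  have hA : ∀ t ∈ Ioc 0 a, ENNReal.ofReal α ≤ rearr μ f t := fun t ht =>
    ofReal_le_rearr ((ofReal_le_ofReal (ht.2.trans (min_le_left _ _))).trans_lt hrd)
  set S := ⨆ p ∈ J, lorentzNorm μ f p q
  set A := ENNReal.ofReal α
  have hA0 : A ≠ 0 := (ofReal_pos.2 hα).ne'
  have ha0' : ENNReal.ofReal a ≠ 0 := (ofReal_pos.2 ha0).ne'
  have hQ : 0 < q.toReal := toReal_pos hq0 hq
  have hbound : ∀ p ∈ J, q ≤ p → p ≤ (S / A) ^ q.toReal * q / ENNReal.ofReal a := by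
    intro p hp hqp
    have h1 : (ENNReal.ofReal a * p / q) ^ q.toReal⁻¹ ≤ S / A := by
      rw [ENNReal.le_div_iff_mul_le (Or.inl hA0) (Or.inr hf.ne), mul_comm, ← one_div]
      exact (le_lorentzNorm_of_le_rearr_of_le (hJ hp).ne hq0 hqp ha0 (min_le_right _ _) hA).trans
        (le_biSup (fun p => lorentzNorm μ f p q) hp)
    rw [ENNReal.rpow_inv_le_iff hQ, ENNReal.div_le_iff hq0 hq, mul_comm] at h1
    exact (ENNReal.le_div_iff_mul_le (Or.inl ha0') (Or.inl ofReal_ne_top)).2 h1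
  have hJbdd : J ⊆ Iic (max q ((S / A) ^ q.toReal * q / ENNReal.ofReal a)) := fun p hp =>
    (le_total p q).elim (le_max_of_le_left ·) (le_max_of_le_right <| hbound p hp ·)
  refine (sSup_le hJbdd).not_gt (hM ▸ max_lt hq.lt_top (ENNReal.div_lt_top ?_ ha0'))
  exact ENNReal.mul_ne_top
    (ENNReal.rpow_ne_top_of_nonneg hQ.le (ENNReal.div_lt_top hf.ne hA0).ne) hq

end Rearrangement

theorem stmt11_general (μ : Measure X) (q : ℝ≥0∞) (hq0 : 0 < q) (hq : q ≠ ∞) (J : Set ℝ≥0∞)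
    (hJ : J ⊆ Ioo 0 ∞) (hM : sSup J = ∞) :
    ∀ f ∈ ILJq μ J q, f =ᵐ[μ] 0 := fun _ hf =>
  ae_eq_zero_of_distFun_eq_zero fun _ hα =>
    distFun_eq_zero_of_iSup_lorentzNorm_lt_top hq0.ne' hq (fun _ hp => (hJ hp).2) hM hf.2 hα

/-- If `0 < q < ∞` and `M_J = ∞`, then every `f ∈ IL_{J,q}` vanishes `μ`-a.e. -/
theorem stmt11 (μ : Measure X) (q : ℝ≥0∞) (hq0 : 0 < q) (hq : q ≠ ∞) (J : Set ℝ≥0∞)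
    (hJne : J.Nonempty) (hJ : J ⊆ Ioo 0 ∞) (hm : 0 < sInf J) (hM : sSup J = ∞) :
    ∀ f ∈ ILJq μ J q, f =ᵐ[μ] 0 :=
  stmt11_general μ q hq0 hq J hJ hM
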